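/- Let C and D be finitely generated free ℤ-graded, ℤ-filtered chain complexes over 𝔽₂[U] that are filtered chain homotopy equivalent, and for t ∈ [0,1] let Υ_C(t) be the maximal gr_t-grading of a homogeneous non-torsion class in H(C^t). Then Υ_C(t) = Υ_D(t) for all t ∈ [0,1]. -/

import Mathlib

open scoped NNReal
open Polynomial

abbrev F2 := ZMod 2
abbrev PU := Polynomial F2
abbrev LongR := HahnSeries ℝ≥0 F2

noncomputable example : CommRing LongR := inferInstance

noncomputable def v (α : ℝ≥0) : LongR := HahnSeries.single α 1

/-- A finitely generated, free, `ℤ`-graded `ℤ`-filtered chain complex over `𝔽₂[U]`,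
presented by a basis with Maslov grading `M`, Alexander filtration level `A`, and
structure coefficients `c`, so that `∂ x = ∑ y, c x y • U ^ ((M y - M x + 1)/2) • y`. -/
structure BasedComplex where
  ι : Type
  [fin : Fintype ι]
  [dec : DecidableEq ι]
  M : ι → ℤ
  A : ι → ℤ
  c : ι → ι → F2
  hM : ∀ x y, c x y ≠ 0 → ∃ k : ℕ, M y = M x - 1 + 2 * k
  hA : ∀ x y, c x y ≠ 0 → 2 * (A y - A x) ≤ M y - M x + 1
  d2 : ∀ x z, (∑ y, c x y * c y z) = 0

attribute [instance] BasedComplex.fin BasedComplex.dec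

namespace BasedComplex

variable (C : BasedComplex)

/-- The underlying free `𝔽₂[U]`-module. -/
abbrev PMod := C.ι → PU

/-- The differential of the complex over `𝔽₂[U]`. -/
noncomputable def pDiff : C.PMod →ₗ[PU] C.PMod where
  toFun f := fun y => ∑ x, f x * (Polynomial.C (C.c x y) * Polynomial.X ^ ((C.M y - C.M x + 1) / 2).toNat)
  map_add' f g := by
    funext y
    simp [add_mul, Finset.sum_add_distrib]
  map_smul' r f := by
    funext y
    simp [Finset.mul_sum, mul_assoc]

/-- Homogeneous of Maslov degree `m` (the basis element `U^k x` has degree `M x - 2k`). -/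
def PHomog (m : ℤ) (f : C.PMod) : Prop :=
  ∀ x k, (f x).coeff k ≠ 0 → C.M x - 2 * (k : ℤ) = m

/-- Lies in Alexander filtration level `≤ a` (the element `U^k x` has level `A x - k`). -/
def PInFilt (a : ℤ) (f : C.PMod) : Prop :=
  ∀ x k, (f x).coeff k ≠ 0 → C.A x - (k : ℤ) ≤ a

end BasedComplex

/-- A graded, filtered chain map over `𝔽₂[U]`. -/
structure PChainMap (C D : BasedComplex) where
  toFun : C.PMod →ₗ[PU] D.PMod
  comm : ∀ f, toFun (C.pDiff f) = D.pDiff (toFun f)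
  graded : ∀ m f, C.PHomog m f → D.PHomog m (toFun f)
  filtered : ∀ a f, C.PInFilt a f → D.PInFilt a (toFun f)

/-- Filtered chain homotopy between two maps (char 2, so signs are irrelevant). -/
def PHomotopic (C D : BasedComplex) (φ ψ : C.PMod →ₗ[PU] D.PMod) : Prop :=
  ∃ H : C.PMod →ₗ[PU] D.PMod,
    (∀ a f, C.PInFilt a f → D.PInFilt a (H f)) ∧
    (∀ m f, C.PHomog m f → D.PHomog (m + 1) (H f)) ∧
    ∀ f, D.pDiff (H f) + H (C.pDiff f) = φ f + ψ f

/-- Filtered chain homotopy equivalence of complexes over `𝔽₂[U]`. -/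
def FilteredHtpyEquiv (C D : BasedComplex) : Prop :=
  ∃ (φ : PChainMap C D) (ψ : PChainMap D C),
    PHomotopic C C (ψ.toFun.comp φ.toFun) LinearMap.id ∧
    PHomotopic D D (φ.toFun.comp ψ.toFun) LinearMap.id

namespace BasedComplex

variable (C : BasedComplex)

/-- `gr_t` of a basis element: `M x - t * A x`. -/
noncomputable def grt (t : ℝ) (x : C.ι) : ℝ := (C.M x : ℝ) - t * (C.A x : ℝ)

/-- Exponent of `v` in the `t`-modified differential. -/
noncomputable def texp (t : ℝ) (x y : C.ι) : ℝ≥0 := (C.grt t y - C.grt t x + 1).toNNReal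

/-- The `t`-modified differential `∂_t x = ∑ y, c x y • v ^ (gr_t y - gr_t x + 1) • y`,
on the `t`-modified complex `C^t = ⊕_x ℛ⟨x⟩`. -/
noncomputable def tDiff (t : ℝ) : (C.ι → LongR) →ₗ[LongR] (C.ι → LongR) where
  toFun f := fun y => ∑ x, f x * HahnSeries.single (C.texp t x y) (C.c x y)
  map_add' f g := by
    funext y
    simp [add_mul, Finset.sum_add_distrib]
  map_smul' r f := by
    funext y
    simp [Finset.mul_sum, mul_assoc]

/-- Homogeneous of `gr_t`-degree `d` in `C^t` (the element `v^α x` has degree `gr_t x - α`). -/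
def THomog (t d : ℝ) (f : C.ι → LongR) : Prop :=
  ∀ x α, (f x).coeff α ≠ 0 → C.grt t x - (α : ℝ) = d

noncomputable abbrev tCycles (t : ℝ) : Submodule LongR (C.ι → LongR) :=
  LinearMap.ker (C.tDiff t)

/-- Homology of the `t`-modified complex, as an `ℛ`-module. -/
noncomputable abbrev tHomology (t : ℝ) :=
  C.tCycles t ⧸ (LinearMap.range (C.tDiff t)).comap (C.tCycles t).subtype

noncomputable def tClass (t : ℝ) (f : C.ι → LongR) (hf : f ∈ C.tCycles t) :
    C.tHomology t :=
  Submodule.Quotient.mk ⟨f, hf⟩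

/-- The set of `gr_t`-gradings of homogeneous, non-torsion classes in `H(C^t)`. -/
noncomputable def UpsSet (t : ℝ) : Set ℝ :=
  {d | ∃ (f : C.ι → LongR) (hf : f ∈ C.tCycles t),
    C.THomog t d f ∧ ∀ r : LongR, r ≠ 0 → r • C.tClass t f hf ≠ 0}

end BasedComplex

/-- A graded chain map of `t`-modified complexes over `ℛ`. -/
def TChainMapProp (C D : BasedComplex) (t : ℝ)
    (φ : (C.ι → LongR) →ₗ[LongR] (D.ι → LongR)) : Prop :=
  (∀ f, φ (C.tDiff t f) = D.tDiff t (φ f)) ∧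
  ∀ d f, C.THomog t d f → D.THomog t d (φ f)

/-- Graded chain homotopy equivalence of `t`-modified complexes over `ℛ`. -/
def THtpyEquiv (C D : BasedComplex) (t : ℝ) : Prop :=
  ∃ (φ : (C.ι → LongR) →ₗ[LongR] (D.ι → LongR))
    (ψ : (D.ι → LongR) →ₗ[LongR] (C.ι → LongR))
    (H₁ : (C.ι → LongR) →ₗ[LongR] (C.ι → LongR))
    (H₂ : (D.ι → LongR) →ₗ[LongR] (D.ι → LongR)),
    TChainMapProp C D t φ ∧ TChainMapProp D C t ψ ∧
    (∀ d f, C.THomog t d f → C.THomog t (d + 1) (H₁ f)) ∧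
    (∀ f, C.tDiff t (H₁ f) + H₁ (C.tDiff t f) = ψ (φ f) + f) ∧
    (∀ d f, D.THomog t d f → D.THomog t (d + 1) (H₂ f)) ∧
    (∀ f, D.tDiff t (H₂ f) + H₂ (D.tDiff t f) = φ (ψ f) + f)

/-!
A filtered map over `𝔽₂[U]` is a matrix of polynomials whose entries `U^k` from `x` to `y`
satisfy `A y - k ≤ A x`. Replacing each `U^k` by `v^(2k - t(A y - A x))`, an exponent that this
bound keeps nonnegative for `t ∈ [0,1]`, respects composition because the `t A` terms telescope
along products of matrices. It sends `∂` to `∂_t`, so it turns the filtered homotopy equivalence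
into a graded homotopy equivalence of the `t`-modified complexes. Such an equivalence maps
homogeneous non-torsion cycles to homogeneous non-torsion cycles of the same `gr_t`-degree in
both directions, so the two sets of degrees, and hence their suprema, coincide.
-/

/-- `p ↦ v^c · p(v²)`. Exponents are truncated at `0` by `Real.toNNReal`; this is harmless as
long as `2 * k + c ≥ 0` on the support of `p`, which is what the filtration guarantees. -/
noncomputable def substVSq (c : ℝ) : PU →+ LongR where
  toFun p := p.sum fun k a => HahnSeries.single (2 * k + c).toNNReal a
  map_zero' := sum_zero_index _
  map_add' p q :=
    sum_add_index p q _ (fun _ => HahnSeries.single_eq_zero) fun _ _ _ =>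
      HahnSeries.single_add _ _ _

lemma substVSq_apply (c : ℝ) (p : PU) :
    substVSq c p = ∑ k ∈ p.support, HahnSeries.single (2 * k + c).toNNReal (p.coeff k) :=
  sum_def _ _

lemma substVSq_monomial (c : ℝ) (n : ℕ) (a : F2) :
    substVSq c (monomial n a) = HahnSeries.single (2 * n + c).toNNReal a :=
  sum_monomial_index a _ HahnSeries.single_eq_zero

lemma substVSq_one (c : ℝ) : substVSq c 1 = HahnSeries.single c.toNNReal 1 := by
  rw [← monomial_zero_one, substVSq_monomial]
  simp

lemma exists_coeff_ne_zero_of_coeff_substVSq_ne_zero {c : ℝ} {p : PU} {β : ℝ≥0}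
    (h : (substVSq c p).coeff β ≠ 0) : ∃ k, p.coeff k ≠ 0 ∧ β = (2 * k + c).toNNReal := by
  rw [substVSq_apply, HahnSeries.coeff_sum] at h
  obtain ⟨k, -, hk⟩ := Finset.exists_ne_zero_of_sum_ne_zero h
  rw [HahnSeries.coeff_single] at hk
  split_ifs at hk with hβ
  · exact ⟨k, hk, hβ⟩
  · exact absurd rfl hk

lemma substVSq_mul {c c' : ℝ} {p q : PU} (hp : ∀ k, p.coeff k ≠ 0 → 0 ≤ 2 * k + c)
    (hq : ∀ k, q.coeff k ≠ 0 → 0 ≤ 2 * k + c') :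
    substVSq c p * substVSq c' q = substVSq (c + c') (p * q) := by
  rw [mul_eq_sum_sum, map_sum, substVSq_apply, substVSq_apply, Finset.sum_mul_sum]
  refine Finset.sum_congr rfl fun i hi => ?_
  rw [sum_def, map_sum]
  refine Finset.sum_congr rfl fun j hj => ?_
  rw [substVSq_monomial, HahnSeries.single_mul_single,
    ← Real.toNNReal_add (hp i (mem_support_iff.1 hi)) (hq j (mem_support_iff.1 hj))]
  push_cast
  ring_nf

lemma exists_coeff_ne_zero_of_coeff_sum_mul_ne_zero {Γ R ι : Type*} [AddCommMonoid Γ]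
    [PartialOrder Γ] [IsOrderedCancelAddMonoid Γ] [Semiring R] {s : Finset ι}
    {a b : ι → HahnSeries Γ R} {g : Γ} (h : (∑ i ∈ s, a i * b i).coeff g ≠ 0) :
    ∃ i ∈ s, ∃ β γ, β + γ = g ∧ (a i).coeff β ≠ 0 ∧ (b i).coeff γ ≠ 0 := by
  rw [HahnSeries.coeff_sum] at h
  obtain ⟨i, hi, hne⟩ := Finset.exists_ne_zero_of_sum_ne_zero h
  rw [HahnSeries.coeff_mul] at hne
  obtain ⟨⟨β, γ⟩, hmem, hβγ⟩ := Finset.exists_ne_zero_of_sum_ne_zero hne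
  exact ⟨i, hi, β, γ, (Finset.mem_antidiagonal.1 hmem).2.2,
    left_ne_zero_of_mul hβγ, right_ne_zero_of_mul hβγ⟩

lemma eq_and_eq_zero_of_coeff_single_ne_zero {ι : Type} [DecidableEq ι] {x x' : ι} {k : ℕ}
    (h : ((Pi.single x 1 : ι → PU) x').coeff k ≠ 0) : x' = x ∧ k = 0 := by
  obtain rfl : x' = x := by
    by_contra hx
    simp [hx] at h
  exact ⟨rfl, by simpa [coeff_one, eq_comm] using h⟩

namespace BasedComplex

variable {C D E : BasedComplex} {t : ℝ}

def FilteredMatrix (M : Matrix D.ι C.ι PU) : Prop :=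
  ∀ y x k, (M y x).coeff k ≠ 0 → D.A y - k ≤ C.A x

def GradedMatrix (s : ℤ) (M : Matrix D.ι C.ι PU) : Prop :=
  ∀ y x k, (M y x).coeff k ≠ 0 → D.M y - 2 * k = C.M x + s

noncomputable def tModMatrix (t : ℝ) (M : Matrix D.ι C.ι PU) : Matrix D.ι C.ι LongR :=
  Matrix.of fun y x => substVSq (t * (C.A x - D.A y)) (M y x)

@[simp]
lemma tModMatrix_apply (t : ℝ) (M : Matrix D.ι C.ι PU) (y : D.ι) (x : C.ι) :
    tModMatrix t M y x = substVSq (t * (C.A x - D.A y)) (M y x) :=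
  rfl

lemma FilteredMatrix.exponent_nonneg {M : Matrix D.ι C.ι PU} (hM : FilteredMatrix M)
    (ht : t ∈ Set.Icc (0 : ℝ) 1) {y : D.ι} {x : C.ι} {k : ℕ} (hk : (M y x).coeff k ≠ 0) :
    0 ≤ 2 * (k : ℝ) + t * (C.A x - D.A y) := by
  have hAk : D.A y - C.A x ≤ (k : ℤ) := by
    have := hM y x k hk
    omega
  have hAk' : (D.A y : ℝ) - C.A x ≤ k := by exact_mod_cast hAk
  obtain ⟨h0, h1⟩ := ht
  rcases le_total (D.A y : ℝ) (C.A x) with h | h <;> nlinarith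

lemma tModMatrix_mul (ht : t ∈ Set.Icc (0 : ℝ) 1) {N : Matrix E.ι D.ι PU}
    {M : Matrix D.ι C.ι PU} (hN : FilteredMatrix N) (hM : FilteredMatrix M) :
    tModMatrix t (N * M) = tModMatrix t N * tModMatrix t M := by
  refine Matrix.ext fun z x => ?_
  simp only [tModMatrix, Matrix.of_apply, Matrix.mul_apply, map_sum]
  refine Finset.sum_congr rfl fun y _ => ?_
  rw [substVSq_mul (fun _ => hN.exponent_nonneg ht) (fun _ => hM.exponent_nonneg ht)]
  ring_nf

lemma tModMatrix_add (M N : Matrix D.ι C.ι PU) :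
    tModMatrix t (M + N) = tModMatrix t M + tModMatrix t N := by
  refine Matrix.ext fun y x => ?_
  simp [tModMatrix]

lemma tModMatrix_one : tModMatrix t (1 : Matrix C.ι C.ι PU) = 1 := by
  refine Matrix.ext fun y x => ?_
  by_cases hxy : y = x
  · subst hxy
    simp [tModMatrix, substVSq_one]
  · simp [tModMatrix, Matrix.one_apply, hxy]


lemma filteredMatrix_toMatrix' {ℓ : C.PMod →ₗ[PU] D.PMod}
    (hℓ : ∀ a f, C.PInFilt a f → D.PInFilt a (ℓ f)) :
    FilteredMatrix (LinearMap.toMatrix' ℓ) := by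
  intro y x k hk
  rw [LinearMap.toMatrix'_apply] at hk
  have := hℓ (C.A x) (Pi.single x 1) (fun x' j hj => by
    obtain ⟨rfl, rfl⟩ := eq_and_eq_zero_of_coeff_single_ne_zero hj
    simp) y k hk
  omega

lemma gradedMatrix_toMatrix' {ℓ : C.PMod →ₗ[PU] D.PMod} {s : ℤ}
    (hℓ : ∀ m f, C.PHomog m f → D.PHomog (m + s) (ℓ f)) :
    GradedMatrix s (LinearMap.toMatrix' ℓ) := by
  intro y x k hk
  rw [LinearMap.toMatrix'_apply] at hk
  exact hℓ (C.M x) (Pi.single x 1) (fun x' j hj => by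
    obtain ⟨rfl, rfl⟩ := eq_and_eq_zero_of_coeff_single_ne_zero hj
    simp) y k hk

lemma toMatrix'_pDiff (y x : C.ι) :
    LinearMap.toMatrix' C.pDiff y x = monomial ((C.M y - C.M x + 1) / 2).toNat (C.c x y) := by
  simp [LinearMap.toMatrix'_apply, pDiff, Pi.single_apply, C_mul_X_pow_eq_monomial]

lemma filteredMatrix_pDiff : FilteredMatrix (LinearMap.toMatrix' C.pDiff) := by
  intro y x k hk
  rw [toMatrix'_pDiff, coeff_monomial] at hk
  split_ifs at hk with hk'
  · obtain ⟨j, hj⟩ := C.hM x y hk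
    have := C.hA x y hk
    omega
  · exact absurd rfl hk

lemma tModMatrix_pDiff (y x : C.ι) :
    tModMatrix t (LinearMap.toMatrix' C.pDiff) y x =
      HahnSeries.single (C.texp t x y) (C.c x y) := by
  by_cases hc : C.c x y = 0
  · rw [tModMatrix_apply, toMatrix'_pDiff, hc]
    simp
  obtain ⟨j, hj⟩ := C.hM x y hc
  have hn : ((C.M y - C.M x + 1) / 2).toNat = j := by omega
  rw [tModMatrix_apply, toMatrix'_pDiff, hn, substVSq_monomial, texp, grt, grt]
  congr 3
  push_cast [hj]
  ring

noncomputable def tMod (t : ℝ) (ℓ : C.PMod →ₗ[PU] D.PMod) :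
    (C.ι → LongR) →ₗ[LongR] (D.ι → LongR) :=
  (tModMatrix t (LinearMap.toMatrix' ℓ)).mulVecLin

lemma tMod_comp (ht : t ∈ Set.Icc (0 : ℝ) 1) {ℓ₁ : C.PMod →ₗ[PU] D.PMod}
    {ℓ₂ : D.PMod →ₗ[PU] E.PMod} (h₁ : FilteredMatrix (LinearMap.toMatrix' ℓ₁))
    (h₂ : FilteredMatrix (LinearMap.toMatrix' ℓ₂)) :
    tMod t (ℓ₂ ∘ₗ ℓ₁) = tMod t ℓ₂ ∘ₗ tMod t ℓ₁ := by
  rw [tMod, LinearMap.toMatrix'_comp, tModMatrix_mul ht h₂ h₁, Matrix.mulVecLin_mul]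
  rfl

lemma tMod_add (ℓ ℓ' : C.PMod →ₗ[PU] D.PMod) : tMod t (ℓ + ℓ') = tMod t ℓ + tMod t ℓ' := by
  simp only [tMod, map_add, tModMatrix_add]

lemma tMod_id : tMod t (LinearMap.id : C.PMod →ₗ[PU] C.PMod) = LinearMap.id := by
  rw [tMod, LinearMap.toMatrix'_id, tModMatrix_one, Matrix.mulVecLin_one]

lemma tMod_pDiff : tMod t C.pDiff = C.tDiff t := by
  refine LinearMap.ext fun f => funext fun y => ?_
  simp only [tMod, Matrix.mulVecLin_apply, Matrix.mulVec, dotProduct, tModMatrix_pDiff]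
  exact Finset.sum_congr rfl fun x _ => mul_comm _ _

lemma tMod_tHomog (ht : t ∈ Set.Icc (0 : ℝ) 1) {ℓ : C.PMod →ₗ[PU] D.PMod} {s : ℤ}
    (hF : FilteredMatrix (LinearMap.toMatrix' ℓ)) (hG : GradedMatrix s (LinearMap.toMatrix' ℓ))
    {d : ℝ} {f : C.ι → LongR} (hf : C.THomog t d f) : D.THomog t (d + s) (tMod t ℓ f) := by
  intro y α hα
  change (∑ x, tModMatrix t (LinearMap.toMatrix' ℓ) y x * f x).coeff α ≠ 0 at hα
  obtain ⟨x, -, β, γ, hβγ, hβ, hγ⟩ := exists_coeff_ne_zero_of_coeff_sum_mul_ne_zero hα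
  rw [tModMatrix_apply] at hβ
  obtain ⟨k, hk, rfl⟩ := exists_coeff_ne_zero_of_coeff_substVSq_ne_zero hβ
  have hd := hf x γ hγ
  have hM : (D.M y : ℝ) - 2 * k = C.M x + s := by exact_mod_cast hG y x k hk
  rw [← hβγ, NNReal.coe_add, Real.coe_toNNReal _ (hF.exponent_nonneg ht hk)]
  simp only [grt] at hd ⊢
  linarith

lemma smul_tClass_eq_zero_iff {f : C.ι → LongR} (hf : f ∈ C.tCycles t) (r : LongR) :
    r • C.tClass t f hf = 0 ↔ r • f ∈ LinearMap.range (C.tDiff t) := by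
  rw [tClass, ← Submodule.Quotient.mk_smul, Submodule.Quotient.mk_eq_zero, Submodule.mem_comap]
  rfl

end BasedComplex

open BasedComplex

lemma PChainMap.tChainMapProp_tMod {C D : BasedComplex} {t : ℝ} (φ : PChainMap C D)
    (ht : t ∈ Set.Icc (0 : ℝ) 1) : TChainMapProp C D t (tMod t φ.toFun) := by
  have hφ := filteredMatrix_toMatrix' φ.filtered
  refine ⟨fun f => ?_, fun d f hf => ?_⟩
  · rw [← tMod_pDiff, ← tMod_pDiff, ← LinearMap.comp_apply, ← LinearMap.comp_apply,
      ← tMod_comp ht filteredMatrix_pDiff hφ, ← tMod_comp ht hφ filteredMatrix_pDiff]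
    congr 2
    exact LinearMap.ext φ.comm
  · simpa using tMod_tHomog ht hφ (gradedMatrix_toMatrix' (s := 0) (by simpa using φ.graded)) hf

lemma PHomotopic.exists_tHomotopy {C D : BasedComplex} {t : ℝ} {φ ψ : C.PMod →ₗ[PU] D.PMod}
    (h : PHomotopic C D φ ψ) (ht : t ∈ Set.Icc (0 : ℝ) 1) :
    ∃ K : (C.ι → LongR) →ₗ[LongR] (D.ι → LongR),
      (∀ d f, C.THomog t d f → D.THomog t (d + 1) (K f)) ∧
      ∀ f, D.tDiff t (K f) + K (C.tDiff t f) = tMod t φ f + tMod t ψ f := by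
  obtain ⟨H, hHf, hHg, hH⟩ := h
  have hF := filteredMatrix_toMatrix' hHf
  refine ⟨tMod t H, fun d f hf => by simpa using tMod_tHomog ht hF (gradedMatrix_toMatrix' hHg) hf,
    fun f => ?_⟩
  have key := congrArg (fun ℓ => tMod t ℓ f) (LinearMap.ext hH :
    D.pDiff ∘ₗ H + H ∘ₗ C.pDiff = φ + ψ)
  simpa only [tMod_add, tMod_comp ht hF filteredMatrix_pDiff, tMod_comp ht filteredMatrix_pDiff hF,
    tMod_pDiff, LinearMap.add_apply, LinearMap.comp_apply] using key

theorem FilteredHtpyEquiv.tHtpyEquiv {C D : BasedComplex} {t : ℝ} (h : FilteredHtpyEquiv C D)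
    (ht : t ∈ Set.Icc (0 : ℝ) 1) : THtpyEquiv C D t := by
  obtain ⟨φ, ψ, hψφ, hφψ⟩ := h
  obtain ⟨H₁, hH₁g, hH₁⟩ := hψφ.exists_tHomotopy ht
  obtain ⟨H₂, hH₂g, hH₂⟩ := hφψ.exists_tHomotopy ht
  have hφ := filteredMatrix_toMatrix' φ.filtered
  have hψ := filteredMatrix_toMatrix' ψ.filtered
  refine ⟨tMod t φ.toFun, tMod t ψ.toFun, H₁, H₂, φ.tChainMapProp_tMod ht,
    ψ.tChainMapProp_tMod ht, hH₁g, fun f => ?_, hH₂g, fun f => ?_⟩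
  · rw [hH₁, tMod_comp ht hφ hψ, tMod_id]
    rfl
  · rw [hH₂, tMod_comp ht hψ hφ, tMod_id]
    rfl

/-- If `r • Φ f = ∂ w`, then `r • f = ∂ (r • K f - Ψ w)`. -/
lemma upsSet_subset_of_tHomotopy {C D : BasedComplex} {t : ℝ}
    {Φ : (C.ι → LongR) →ₗ[LongR] (D.ι → LongR)} {Ψ : (D.ι → LongR) →ₗ[LongR] (C.ι → LongR)}
    {K : (C.ι → LongR) →ₗ[LongR] (C.ι → LongR)} (hΦ : TChainMapProp C D t Φ)
    (hΨ : ∀ f, Ψ (D.tDiff t f) = C.tDiff t (Ψ f))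
    (hK : ∀ f, C.tDiff t (K f) + K (C.tDiff t f) = Ψ (Φ f) + f) :
    C.UpsSet t ⊆ D.UpsSet t := by
  rintro d ⟨f, hf, hhom, htors⟩
  have hΦf : Φ f ∈ D.tCycles t := by
    rw [LinearMap.mem_ker, ← hΦ.1, LinearMap.mem_ker.1 hf, map_zero]
  refine ⟨Φ f, hΦf, hΦ.2 d f hhom, fun r hr hzero => htors r hr ?_⟩
  obtain ⟨w, hw⟩ := (smul_tClass_eq_zero_iff hΦf r).1 hzero
  have hKf : f = C.tDiff t (K f) - Ψ (Φ f) :=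
    eq_sub_of_add_eq' (by simpa [LinearMap.mem_ker.1 hf] using (hK f).symm)
  refine (smul_tClass_eq_zero_iff hf r).2 ⟨r • K f - Ψ w, ?_⟩
  rw [map_sub, map_smul, ← hΨ, hw, map_smul, ← smul_sub, ← hKf]

theorem THtpyEquiv.upsSet_eq {C D : BasedComplex} {t : ℝ} (h : THtpyEquiv C D t) :
    C.UpsSet t = D.UpsSet t := by
  obtain ⟨φ, ψ, H₁, H₂, hφ, hψ, -, hH₁, -, hH₂⟩ := h
  exact (upsSet_subset_of_tHomotopy hφ hψ.1 hH₁).antisymm (upsSet_subset_of_tHomotopy hψ hφ.1 hH₂)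

/-- If `C` and `D` are finitely generated free `ℤ`-graded, `ℤ`-filtered chain complexes
over `𝔽₂[U]` which are filtered chain homotopy equivalent, then for `t ∈ [0,1]` the
Upsilon invariants agree: `Υ_C(t) = Υ_D(t)`, where `Υ_C(t)` is the maximal `gr_t`-grading
of a homogeneous non-torsion class in `H(C^t)`. -/
theorem upsilon_eq_of_filteredHtpyEquiv (C D : BasedComplex)
    (h : FilteredHtpyEquiv C D) :
    ∀ t ∈ Set.Icc (0 : ℝ) 1, sSup (C.UpsSet t) = sSup (D.UpsSet t) := by
  intro t ht
  rw [(h.tHtpyEquiv ht).upsSet_eq]
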